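/- Let v₁, v₂, v₃, v₄ be positive integers with gcd(v₁, v₂, v₃, v₄) = 1. If some three of the four speeds share a common factor g ≥ 2 (i.e., the gcd of some three of the speeds is at least 2), then ML(v₁, v₂, v₃, v₄) ≥ 1/4. -/

import Mathlib

/-!
If `g ≥ 2` divides `v₁, v₂, v₃`, the gcd condition forces `g ∤ v₄`. The three-runner case gives
`s` with `‖s vᵢ / g‖ ≥ 1/4` for `i ≤ 3`. The times `t = (s + m) / g`, `m ∈ ℤ`, change each `t vᵢ`
(`i ≤ 3`) by an integer, while `t v₄` runs modulo `1` through a coset of `(gcd(v₄, g) / g) ℤ`,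
whose spacing is at most `1/2`; so one of them also puts `t v₄` at distance `≥ 1/4` from `ℤ`.

The three-runner case goes by descent on the parities of the speeds `a, b, c`. If all are even,
halve them; if all are odd, take `t = 1/2`; if only `a` is odd, take a good time for the halved
even speeds and add `1/2` to it if `a` needs moving. If `a, b` are odd and `c` is even, take
`t = 1/4` when `c ≡ 2 mod 4`, `t = (2m + 1) / (4a)` or `t + 1/2` when `2a ∤ c`, and
`t = w / (2c)` for a suitable odd `w` when `4a ∣ c` and `4b ∣ c`.
-/

/-- `dnn x` is the distance from `x` to the nearest integer:
`dnn x = min_{m : ℤ} |x - m|`. -/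
noncomputable def dnn (x : ℝ) : ℝ := ⨅ m : ℤ, |x - m|

/-- The maximum loneliness of speeds `v 0, …, v (n-1)`:
`ML v = sup_{t : ℝ} min_{i} dnn (t * v i)`. -/
noncomputable def ML {n : ℕ} (v : Fin n → ℝ) : ℝ := ⨆ t : ℝ, ⨅ i, dnn (t * v i)

def FarFromInt (x : ℝ) : Prop := Int.fract x ∈ Set.Icc (1 / 4 : ℝ) (3 / 4)

section FarFromInt

variable {x : ℝ}

theorem FarFromInt.quarter_le_dnn (h : FarFromInt x) : 1 / 4 ≤ dnn x := by
  obtain ⟨h₁, h₂⟩ := h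
  refine le_ciInf fun m => ?_
  rw [← Int.self_sub_floor] at h₁ h₂
  rcases le_or_gt m ⌊x⌋ with hm | hm
  · have : (m : ℝ) ≤ ⌊x⌋ := by exact_mod_cast hm
    exact (by linarith : 1 / 4 ≤ x - m).trans (le_abs_self _)
  · have : (⌊x⌋ : ℝ) + 1 ≤ m := by exact_mod_cast hm
    exact (by linarith : 1 / 4 ≤ -(x - m)).trans (neg_le_abs _)

@[simp]
theorem farFromInt_add_intCast (k : ℤ) : FarFromInt (x + k) ↔ FarFromInt x := by
  simp only [FarFromInt, Int.fract_add_intCast]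

@[simp]
theorem farFromInt_add_natCast (k : ℕ) : FarFromInt (x + k) ↔ FarFromInt x := by
  simp only [FarFromInt, Int.fract_add_natCast]

theorem farFromInt_of_sub_intCast_mem (n : ℤ) (h : x - n ∈ Set.Icc (1 / 4 : ℝ) (3 / 4)) :
    FarFromInt x := by
  have : Int.fract x = x - n :=
    Int.fract_eq_iff.2 ⟨by linarith [h.1], by linarith [h.2], n, by ring⟩
  rwa [FarFromInt, this]

theorem farFromInt_or_add_half (x : ℝ) : FarFromInt x ∨ FarFromInt (x + 1 / 2) := by
  have h₁ := Int.floor_le (x + 1 / 4)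
  have h₂ := Int.lt_floor_add_one (x + 1 / 4)
  rcases le_or_gt (1 / 4) (x - ⌊x + 1 / 4⌋) with h | h
  · exact .inl <| farFromInt_of_sub_intCast_mem _ ⟨h, by linarith⟩
  · exact .inr <| farFromInt_of_sub_intCast_mem ⌊x + 1 / 4⌋ ⟨by linarith, by linarith⟩

theorem farFromInt_intCast_div {p : ℤ} {q : ℕ} (hq : 0 < q) (h₁ : q ≤ 4 * (p % q))
    (h₂ : 4 * (p % q) ≤ 3 * q) : FarFromInt (p / q) := by
  have hq' : (0 : ℝ) < q := by exact_mod_cast hq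
  have h₁' : (q : ℝ) ≤ 4 * ((p % q : ℤ) : ℝ) := by exact_mod_cast h₁
  have h₂' : 4 * ((p % q : ℤ) : ℝ) ≤ 3 * q := by exact_mod_cast h₂
  rw [FarFromInt, Int.fract_div_intCast_eq_div_intCast_mod]
  constructor
  · rw [le_div_iff₀ hq']; linarith
  · rw [div_le_iff₀ hq']; linarith

theorem farFromInt_odd_div_two {n : ℤ} (hn : Odd n) : FarFromInt (n / 2) := by
  obtain ⟨k, rfl⟩ := hn
  exact_mod_cast farFromInt_intCast_div (p := 2 * k + 1) (q := 2) two_pos (by omega) (by omega)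

theorem farFromInt_odd_div_four {n : ℤ} (hn : Odd n) : FarFromInt (n / 4) := by
  obtain ⟨k, rfl⟩ := hn
  exact_mod_cast farFromInt_intCast_div (p := 2 * k + 1) (q := 4) four_pos (by omega) (by omega)

theorem exists_farFromInt_add_int_mul (z : ℝ) {γ : ℝ} (hγ : 0 < γ) (hγ' : γ ≤ 1 / 2) :
    ∃ j : ℤ, FarFromInt (z + j * γ) := by
  refine ⟨⌈(1 / 4 - z) / γ⌉, farFromInt_of_sub_intCast_mem 0 ⟨?_, ?_⟩⟩
  · have := Int.le_ceil ((1 / 4 - z) / γ)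
    rw [div_le_iff₀ hγ] at this
    push_cast; linarith
  · have := mul_lt_mul_of_pos_right (Int.ceil_lt_add_one ((1 / 4 - z) / γ)) hγ
    rw [add_mul, div_mul_cancel₀ _ hγ.ne'] at this
    push_cast; linarith

theorem exists_farFromInt_add_int_mul_div (z : ℝ) {p q : ℕ} (hq : 0 < q) (hpq : ¬ q ∣ p) :
    ∃ m : ℤ, FarFromInt (z + m * p / q) := by
  have hd : 0 < p.gcd q := Nat.gcd_pos_of_pos_right p hq
  have hdq : 2 * p.gcd q ≤ q := by
    obtain ⟨k, hk⟩ := Nat.gcd_dvd_right p q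
    have hk₁ : k ≠ 1 := by
      rintro rfl
      apply hpq
      rw [hk, mul_one]
      exact Nat.gcd_dvd_left p q
    have hk₀ : k ≠ 0 := by rintro rfl; omega
    have := Nat.mul_le_mul_left (p.gcd q) (show 2 ≤ k by omega)
    omega
  have hq' : (0 : ℝ) < q := by exact_mod_cast hq
  have hdq' : 2 * (p.gcd q : ℝ) ≤ q := by exact_mod_cast hdq
  obtain ⟨j, hj⟩ := exists_farFromInt_add_int_mul z (γ := p.gcd q / q) (by positivity)
    (by rw [div_le_iff₀ hq']; linarith)
  -- Bezout: `m * p / q ≡ j * gcd p q / q` modulo integers for `m = j * gcdA p q`.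
  have hbezout : (p.gcd q : ℝ) = p * p.gcdA q + q * p.gcdB q := by
    exact_mod_cast Nat.gcd_eq_gcd_ab p q
  refine ⟨j * p.gcdA q, ?_⟩
  have : z + ((j * p.gcdA q : ℤ) : ℝ) * p / q =
      z + j * (p.gcd q / q) + (-(j * p.gcdB q) : ℤ) := by
    rw [hbezout]; push_cast; field_simp; ring
  rwa [this, farFromInt_add_intCast]

theorem farFromInt_natCast_div {p q : ℕ} (hq : 0 < q) (h₁ : q ≤ 4 * (p % q))
    (h₂ : 4 * (p % q) ≤ 3 * q) : FarFromInt (p / q) := by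
  have := farFromInt_intCast_div (p := p) hq (by exact_mod_cast h₁) (by exact_mod_cast h₂)
  rwa [Int.cast_natCast] at this

theorem farFromInt_add_half_mul_of_even {t : ℝ} {n : ℕ} (hn : Even n) (h : FarFromInt (t * n)) :
    FarFromInt ((t + 1 / 2) * n) := by
  obtain ⟨k, rfl⟩ := hn
  have : (t + 1 / 2) * ((k + k : ℕ) : ℝ) = t * (k + k : ℕ) + k := by push_cast; ring
  rwa [this, farFromInt_add_natCast]

theorem exists_odd_farFromInt_div {α β : ℕ} (hα : 0 < α) (hβ : 0 < β) :
    ∃ w : ℕ, Odd w ∧ FarFromInt (w / (8 * α : ℕ)) ∧ FarFromInt (w / (8 * β : ℕ)) := by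
  wlog hαβ : α ≤ β generalizing α β
  · obtain ⟨w, hw, hwβ, hwα⟩ := this hβ hα (by omega)
    exact ⟨w, hw, hwα, hwβ⟩
  suffices ∃ w, Odd w ∧ w % (8 * α) ∈ Set.Icc (2 * α) (6 * α) ∧
      w % (8 * β) ∈ Set.Icc (2 * β) (6 * β) by
    obtain ⟨w, hw, ⟨hwα, hwα'⟩, hwβ, hwβ'⟩ := this
    exact ⟨w, hw, farFromInt_natCast_div (by omega) (by omega) (by omega),
      farFromInt_natCast_div (by omega) (by omega) (by omega)⟩
  rcases lt_or_ge β (2 * α) with hβα | hαβ'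
  · refine ⟨2 * β + 1, odd_two_mul_add_one β, ?_, ?_⟩ <;>
      rw [Nat.mod_eq_of_lt (by omega)] <;> constructor <;> omega
  · -- the residue class of `2α + 1` modulo `8α` meets the window `[2β, 6β]`, of length `4β ≥ 8α`
    obtain ⟨q, r, hqr, hr⟩ : ∃ q r, 2 * β + 6 * α - 2 = 8 * α * q + r ∧ r < 8 * α :=
      ⟨_, _, (Nat.div_add_mod _ _).symm, Nat.mod_lt _ (by omega)⟩
    refine ⟨2 * α + 1 + 8 * α * q, ⟨α + 4 * α * q, by ring⟩, ?_, ?_⟩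
    · rw [Nat.add_mul_mod_self_left, Nat.mod_eq_of_lt (by omega)]; constructor <;> omega
    · rw [Nat.mod_eq_of_lt (by omega)]; constructor <;> omega

def HasLonelyTime (a b c : ℕ) : Prop :=
  ∃ t : ℝ, FarFromInt (t * a) ∧ FarFromInt (t * b) ∧ FarFromInt (t * c)

namespace HasLonelyTime

variable {a b c : ℕ}

theorem swap₁₂ (h : HasLonelyTime a b c) : HasLonelyTime b a c :=
  let ⟨t, ha, hb, hc⟩ := h; ⟨t, hb, ha, hc⟩

theorem swap₂₃ (h : HasLonelyTime a b c) : HasLonelyTime a c b :=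
  let ⟨t, ha, hb, hc⟩ := h; ⟨t, ha, hc, hb⟩

theorem two_mul (h : HasLonelyTime a b c) : HasLonelyTime (2 * a) (2 * b) (2 * c) := by
  obtain ⟨t, ha, hb, hc⟩ := h
  have key (n : ℕ) : t / 2 * ((2 * n : ℕ) : ℝ) = t * n := by push_cast; ring
  exact ⟨t / 2, by rwa [key], by rwa [key], by rwa [key]⟩

theorem of_odd (ha : Odd a) (hb : Odd b) (hc : Odd c) : HasLonelyTime a b c := by
  have key {n : ℕ} (hn : Odd n) : FarFromInt (1 / 2 * n) := by
    have := farFromInt_odd_div_two (n := n) hn.natCast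
    rwa [Int.cast_natCast, ← one_div_mul_eq_div] at this
  exact ⟨1 / 2, key ha, key hb, key hc⟩

theorem of_odd_of_add_half {t : ℝ} (ha : Odd a) (hb : FarFromInt (t * b))
    (hb' : FarFromInt ((t + 1 / 2) * b)) (hc : FarFromInt (t * c))
    (hc' : FarFromInt ((t + 1 / 2) * c)) : HasLonelyTime a b c := by
  obtain ⟨k, rfl⟩ := ha
  rcases farFromInt_or_add_half (t * (2 * k + 1 : ℕ)) with h | h
  · exact ⟨t, h, hb, hc⟩
  · have : (t + 1 / 2) * ((2 * k + 1 : ℕ) : ℝ) = t * (2 * k + 1 : ℕ) + 1 / 2 + k := by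
      push_cast; ring
    exact ⟨t + 1 / 2, by rwa [this, farFromInt_add_natCast], hb', hc'⟩

theorem of_odd_two_mul (ha : Odd a) (h : HasLonelyTime b c b) :
    HasLonelyTime a (2 * b) (2 * c) := by
  obtain ⟨_, hb, hc, -⟩ := h.two_mul
  exact of_odd_of_add_half ha hb (farFromInt_add_half_mul_of_even (even_two_mul b) hb)
    hc (farFromInt_add_half_mul_of_even (even_two_mul c) hc)

theorem of_mod_four_eq_two (ha : Odd a) (hb : Odd b) (hc : c % 4 = 2) : HasLonelyTime a b c := by
  have key {n : ℕ} (hn : Odd n) : FarFromInt (1 / 4 * n) := by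
    have := farFromInt_odd_div_four (n := n) hn.natCast
    rwa [Int.cast_natCast, ← one_div_mul_eq_div] at this
  refine ⟨1 / 4, key ha, key hb, ?_⟩
  have := farFromInt_natCast_div (p := c) (q := 4) four_pos (by omega) (by omega)
  rwa [Nat.cast_ofNat, ← one_div_mul_eq_div] at this

theorem of_not_dvd (ha : 0 < a) (hb : Odd b) (hc : Even c) (hac : ¬ 2 * a ∣ c) :
    HasLonelyTime a b c := by
  have ha' : (a : ℝ) ≠ 0 := by positivity
  obtain ⟨m, hm⟩ := exists_farFromInt_add_int_mul_div (c / (4 * a)) (by omega : 0 < 2 * a) hac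
  -- at `t = (2m + 1) / (4a)` and at `t + 1/2`, the speed `a` runner is at an odd multiple of `1/4`
  set t : ℝ := (2 * m + 1) / (4 * a)
  have hta : t * a = ((2 * m + 1 : ℤ) : ℝ) / 4 := by simp only [t]; field_simp; push_cast; ring
  have hta' : (t + 1 / 2) * a = ((2 * (m + a) + 1 : ℤ) : ℝ) / 4 := by
    simp only [t]; field_simp; push_cast; ring
  have htc : t * c = c / (4 * a) + m * c / (2 * a : ℕ) := by
    simp only [t]; push_cast; field_simp; ring
  have hac' : FarFromInt (t * c) := htc ▸ hm
  refine (of_odd_of_add_half hb ?_ ?_ hac' (farFromInt_add_half_mul_of_even hc hac')).swap₁₂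
  · rw [hta]; exact farFromInt_odd_div_four (odd_two_mul_add_one m)
  · rw [hta']; exact farFromInt_odd_div_four (odd_two_mul_add_one _)

theorem of_four_mul_dvd (hc : 0 < c) (hac : 4 * a ∣ c) (hbc : 4 * b ∣ c) :
    HasLonelyTime a b c := by
  obtain ⟨α, hα⟩ := hac
  obtain ⟨β, hβ⟩ := hbc
  have ha : 0 < a := Nat.pos_of_ne_zero (by rintro rfl; omega)
  have hb : 0 < b := Nat.pos_of_ne_zero (by rintro rfl; omega)
  have hα₀ : 0 < α := Nat.pos_of_ne_zero (by rintro rfl; omega)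
  have hβ₀ : 0 < β := Nat.pos_of_ne_zero (by rintro rfl; omega)
  obtain ⟨w, hw, hwα, hwβ⟩ := exists_odd_farFromInt_div hα₀ hβ₀
  refine ⟨w / (2 * c), ?_, ?_, ?_⟩
  · convert hwα using 2; rw [hα]; push_cast; field_simp; ring
  · convert hwβ using 2; rw [hβ]; push_cast; field_simp; ring
  · have := farFromInt_odd_div_two (n := w) hw.natCast
    rw [Int.cast_natCast] at this
    convert this using 2; field_simp

theorem of_odd_of_odd_of_even (ha : Odd a) (hb : Odd b) (hc : Even c) (hc₀ : 0 < c) :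
    HasLonelyTime a b c := by
  have hc₂ := Nat.even_iff.1 hc
  rcases (by omega : c % 4 = 2 ∨ 4 ∣ c) with hc₄ | hc₄
  · exact of_mod_four_eq_two ha hb hc₄
  have four_mul_dvd {n : ℕ} (hn : Odd n) (h : 2 * n ∣ c) : 4 * n ∣ c :=
    Nat.Coprime.mul_dvd_of_dvd_of_dvd ((Nat.coprime_two_left.2 hn).pow_left 2) hc₄
      (dvd_of_mul_left_dvd h)
  by_cases hac : 2 * a ∣ c
  · by_cases hbc : 2 * b ∣ c
    · exact of_four_mul_dvd hc₀ (four_mul_dvd ha hac) (four_mul_dvd hb hbc)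
    · exact (of_not_dvd hb.pos ha hc hbc).swap₁₂
  · exact of_not_dvd ha.pos hb hc hac

theorem of_pos (ha : 0 < a) (hb : 0 < b) (hc : 0 < c) : HasLonelyTime a b c := by
  induction h : a + b + c using Nat.strong_induction_on generalizing a b c with
  | _ n ih =>
  have ih' {x y z : ℕ} (hx : 0 < x) (hy : 0 < y) (hz : 0 < z) (hlt : x + y + z < n) :
      HasLonelyTime x y z := ih _ hlt hx hy hz rfl
  subst h
  obtain ⟨a, rfl | rfl⟩ := Nat.even_or_odd' a <;>
    obtain ⟨b, rfl | rfl⟩ := Nat.even_or_odd' b <;>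
    obtain ⟨c, rfl | rfl⟩ := Nat.even_or_odd' c
  · exact (ih' (by omega) (by omega) (by omega) (by omega)).two_mul
  · exact (of_odd_two_mul (odd_two_mul_add_one c)
      (ih' (by omega) (by omega) (by omega) (by omega))).swap₁₂.swap₂₃
  · exact (of_odd_two_mul (odd_two_mul_add_one b)
      (ih' (by omega) (by omega) (by omega) (by omega))).swap₁₂
  · exact (of_odd_of_odd_of_even (odd_two_mul_add_one b) (odd_two_mul_add_one c)
      (even_two_mul a) ha).swap₂₃.swap₁₂
  · exact of_odd_two_mul (odd_two_mul_add_one a)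
      (ih' (by omega) (by omega) (by omega) (by omega))
  · exact (of_odd_of_odd_of_even (odd_two_mul_add_one a) (odd_two_mul_add_one c)
      (even_two_mul b) hb).swap₂₃
  · exact of_odd_of_odd_of_even (odd_two_mul_add_one a) (odd_two_mul_add_one b)
      (even_two_mul c) hc
  · exact of_odd (odd_two_mul_add_one a) (odd_two_mul_add_one b)
      (odd_two_mul_add_one c)

theorem exists_mul {g d : ℕ} (h : HasLonelyTime a b c) (hg : 0 < g) (hgd : ¬ g ∣ d) :
    ∃ t : ℝ, FarFromInt (t * (g * a : ℕ)) ∧ FarFromInt (t * (g * b : ℕ)) ∧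
      FarFromInt (t * (g * c : ℕ)) ∧ FarFromInt (t * d) := by
  obtain ⟨s, ha, hb, hc⟩ := h
  obtain ⟨m, hm⟩ := exists_farFromInt_add_int_mul_div (s * d / g) hg hgd
  have hg' : (g : ℝ) ≠ 0 := by positivity
  have key (n : ℕ) : (s + m) / g * (g * n : ℕ) = s * n + (m * n : ℤ) := by
    push_cast; field_simp
  refine ⟨(s + m) / g, ?_, ?_, ?_, ?_⟩
  · rwa [key, farFromInt_add_intCast]
  · rwa [key, farFromInt_add_intCast]
  · rwa [key, farFromInt_add_intCast]
  · convert hm using 2; ring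

end HasLonelyTime

theorem exists_farFromInt_of_two_le_gcd {a b c d : ℕ} (ha : 0 < a) (hb : 0 < b) (hc : 0 < c)
    (hg : 2 ≤ Nat.gcd (Nat.gcd a b) c) (hd : Nat.gcd (Nat.gcd (Nat.gcd a b) c) d = 1) :
    ∃ t : ℝ, FarFromInt (t * a) ∧ FarFromInt (t * b) ∧ FarFromInt (t * c) ∧
      FarFromInt (t * d) := by
  have hga : Nat.gcd (Nat.gcd a b) c ∣ a := (Nat.gcd_dvd_left _ _).trans (Nat.gcd_dvd_left _ _)
  have hgb : Nat.gcd (Nat.gcd a b) c ∣ b := (Nat.gcd_dvd_left _ _).trans (Nat.gcd_dvd_right _ _)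
  have hgc : Nat.gcd (Nat.gcd a b) c ∣ c := Nat.gcd_dvd_right _ _
  generalize Nat.gcd (Nat.gcd a b) c = g at hg hd hga hgb hgc
  obtain ⟨a, rfl⟩ := hga
  obtain ⟨b, rfl⟩ := hgb
  obtain ⟨c, rfl⟩ := hgc
  have hgd : ¬ g ∣ d := fun h => by
    have := Nat.le_of_dvd one_pos (hd ▸ Nat.dvd_gcd dvd_rfl h)
    omega
  exact (HasLonelyTime.of_pos (Nat.pos_of_mul_pos_left ha) (Nat.pos_of_mul_pos_left hb)
    (Nat.pos_of_mul_pos_left hc)).exists_mul (by omega) hgd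

theorem dnn_le_half (x : ℝ) : dnn x ≤ 1 / 2 :=
  (ciInf_le ⟨0, by rintro _ ⟨m, rfl⟩; exact abs_nonneg _⟩ (round x)).trans (abs_sub_round x)

theorem quarter_le_ML {n : ℕ} [NeZero n] {v : Fin n → ℝ} (t : ℝ)
    (h : ∀ i, FarFromInt (t * v i)) : 1 / 4 ≤ ML v := by
  have hbdd : BddAbove (Set.range fun t : ℝ => ⨅ i, dnn (t * v i)) :=
    ⟨1 / 2, by
      rintro _ ⟨t, rfl⟩
      exact (ciInf_le (Finite.bddBelow_range _) 0).trans (dnn_le_half _)⟩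
  exact le_ciSup_of_le hbdd t (le_ciInf fun i => (h i).quarter_le_dnn)

theorem stmt_7 (v₁ v₂ v₃ v₄ : ℕ) (h₁ : 0 < v₁) (h₂ : 0 < v₂) (h₃ : 0 < v₃) (h₄ : 0 < v₄)
    (hgcd : Nat.gcd (Nat.gcd (Nat.gcd v₁ v₂) v₃) v₄ = 1)
    (htriple : 2 ≤ Nat.gcd (Nat.gcd v₁ v₂) v₃ ∨ 2 ≤ Nat.gcd (Nat.gcd v₁ v₂) v₄ ∨
      2 ≤ Nat.gcd (Nat.gcd v₁ v₃) v₄ ∨ 2 ≤ Nat.gcd (Nat.gcd v₂ v₃) v₄) :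
    ML ![(v₁ : ℝ), (v₂ : ℝ), (v₃ : ℝ), (v₄ : ℝ)] ≥ 1 / 4 := by
  suffices ∃ t : ℝ, FarFromInt (t * v₁) ∧ FarFromInt (t * v₂) ∧ FarFromInt (t * v₃) ∧
      FarFromInt (t * v₄) by
    obtain ⟨t, hv₁, hv₂, hv₃, hv₄⟩ := this
    refine quarter_le_ML t fun i => ?_
    fin_cases i <;> assumption
  rcases htriple with H | H | H | H
  · exact exists_farFromInt_of_two_le_gcd h₁ h₂ h₃ H hgcd
  · obtain ⟨t, hv₁, hv₂, hv₄, hv₃⟩ :=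
      exists_farFromInt_of_two_le_gcd (d := v₃) h₁ h₂ h₄ H (by rw [← hgcd]; ac_rfl)
    exact ⟨t, hv₁, hv₂, hv₃, hv₄⟩
  · obtain ⟨t, hv₁, hv₃, hv₄, hv₂⟩ :=
      exists_farFromInt_of_two_le_gcd (d := v₂) h₁ h₃ h₄ H (by rw [← hgcd]; ac_rfl)
    exact ⟨t, hv₁, hv₂, hv₃, hv₄⟩
  · obtain ⟨t, hv₂, hv₃, hv₄, hv₁⟩ :=
      exists_farFromInt_of_two_le_gcd (d := v₁) h₂ h₃ h₄ H (by rw [← hgcd]; ac_rfl)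
    exact ⟨t, hv₁, hv₂, hv₃, hv₄⟩
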